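/- arXiv:math/0606008 — 2 statements merged into one kernel-verified Lean document; each statement's English description precedes it below -/
import Mathlib

section
/- Let γ : [0,L] → ℝ³ be an arclength-parametrized curve whose tangent vector satisfies the Lipschitz bound ‖γ'(s) − γ'(t)‖ ≤ κ|s − t| (curvature bounded by κ). If a pair of parameters s < t is doubly critical, meaning the chord γ(t) − γ(s) is orthogonal to both γ'(s) and γ'(t), and γ(t) ≠ γ(s), then the tangent vector turns by at least π/2 along [s,t] in the sense that sup_{u,v ∈ [s,t]} angle(γ'(u), γ'(v)) ≥ π/2; consequently, since turning along [s,t] is bounded by κ·(t − s), t − s ≥ π/(2κ). -/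
open InnerProductGeometry

section Aux

variable {E : Type*} [NormedAddCommGroup E] [InnerProductSpace ℝ E]

local notation "⟪" x ", " y "⟫" => @inner ℝ _ _ x y

/-- Spherical triangle inequality for unit vectors. -/
lemma aux_angle_triangle_unit {x y z : E} (hx : ‖x‖ = 1) (hy : ‖y‖ = 1) (hz : ‖z‖ = 1) :
    angle x z ≤ angle x y + angle y z := by
  by_cases hπ : Real.pi ≤ angle x y + angle y z
  · exact (angle_le_pi x z).trans hπ
  push_neg at hπ
  have hab0 : 0 ≤ angle x y + angle y z := add_nonneg (angle_nonneg _ _) (angle_nonneg _ _)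
  by_contra hlt
  push_neg at hlt
  have hcos : Real.cos (angle x z) < Real.cos (angle x y + angle y z) :=
    Real.strictAntiOn_cos ⟨hab0, hπ.le⟩ ⟨angle_nonneg x z, angle_le_pi x z⟩ hlt
  set p : ℝ := ⟪x, y⟫ with hp
  set q : ℝ := ⟪y, z⟫ with hq
  set r : ℝ := ⟪x, z⟫ with hr
  have hcxy : Real.cos (angle x y) = p := by simp [cos_angle, hx, hy, hp]
  have hcyz : Real.cos (angle y z) = q := by simp [cos_angle, hy, hz, hq]
  have hcxz : Real.cos (angle x z) = r := by simp [cos_angle, hx, hz, hr]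
  -- sines
  have hsin_xy : Real.sin (angle x y) = Real.sqrt (1 - p ^ 2) := by
    have h1 : Real.sin (angle x y) = Real.sqrt (1 - Real.cos (angle x y) ^ 2) := by
      rw [Real.sin_eq_sqrt_one_sub_cos_sq (angle_nonneg _ _) (angle_le_pi _ _)]
    rw [h1, hcxy]
  have hsin_yz : Real.sin (angle y z) = Real.sqrt (1 - q ^ 2) := by
    have h1 : Real.sin (angle y z) = Real.sqrt (1 - Real.cos (angle y z) ^ 2) := by
      rw [Real.sin_eq_sqrt_one_sub_cos_sq (angle_nonneg _ _) (angle_le_pi _ _)]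
    rw [h1, hcyz]
  -- projections
  set x' : E := x - p • y with hx'
  set z' : E := z - q • y with hz'
  have hyy : ⟪y, y⟫ = (1:ℝ) := by
    rw [real_inner_self_eq_norm_sq, hy]; norm_num
  have hinner : ⟪x', z'⟫ = r - p * q := by
    simp only [hx', hz', inner_sub_left, inner_sub_right, real_inner_smul_left,
      real_inner_smul_right, hyy]
    rw [← hp, ← hq, ← hr]; ring
  have hnx' : ‖x'‖ = Real.sqrt (1 - p ^ 2) := by
    rw [← Real.sqrt_sq (norm_nonneg x')]
    congr 1
    rw [← real_inner_self_eq_norm_sq]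
    simp only [hx', inner_sub_left, inner_sub_right, real_inner_smul_left,
      real_inner_smul_right, hyy]
    have hyx : (inner ℝ y x : ℝ) = p := by rw [real_inner_comm]
    rw [hyx, ← hp, real_inner_self_eq_norm_sq, hx]
    ring
  have hnz' : ‖z'‖ = Real.sqrt (1 - q ^ 2) := by
    rw [← Real.sqrt_sq (norm_nonneg z')]
    congr 1
    rw [← real_inner_self_eq_norm_sq]
    simp only [hz', inner_sub_left, inner_sub_right, real_inner_smul_left,
      real_inner_smul_right, hyy]
    have hzy : (inner ℝ z y : ℝ) = q := by rw [real_inner_comm]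
    rw [hzy, ← hq, real_inner_self_eq_norm_sq, hz]
    ring
  have hcs : |⟪x', z'⟫| ≤ ‖x'‖ * ‖z'‖ := abs_real_inner_le_norm x' z'
  have hlow : p * q - Real.sqrt (1 - p ^ 2) * Real.sqrt (1 - q ^ 2) ≤ r := by
    have h1 : -(‖x'‖ * ‖z'‖) ≤ ⟪x', z'⟫ := neg_le_of_abs_le hcs
    rw [hinner, hnx', hnz'] at h1; linarith
  have hadd : Real.cos (angle x y + angle y z)
      = p * q - Real.sqrt (1 - p ^ 2) * Real.sqrt (1 - q ^ 2) := by
    rw [Real.cos_add, hcxy, hcyz, hsin_xy, hsin_yz]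
  rw [hadd, hcxz] at hcos
  linarith

/-- For unit vectors, the angle is `2 arcsin (‖x - y‖ / 2)`. -/
lemma aux_angle_eq_two_arcsin {x y : E} (hx : ‖x‖ = 1) (hy : ‖y‖ = 1) :
    angle x y = 2 * Real.arcsin (‖x - y‖ / 2) := by
  set m : ℝ := ‖x - y‖ / 2 with hm
  have hm0 : 0 ≤ m := by positivity
  have hm1 : m ≤ 1 := by
    have h := norm_sub_le x y
    rw [hx, hy] at h
    rw [hm]; linarith
  have hinner : ⟪x, y⟫ = 1 - 2 * m ^ 2 := by
    have h := @norm_sub_sq_real E _ _ x y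
    rw [hx, hy] at h
    have hmm : ‖x - y‖ = 2 * m := by rw [hm]; ring
    rw [hmm] at h; nlinarith
  have h1 : angle x y = Real.arccos (1 - 2 * m ^ 2) := by
    rw [angle, hx, hy, hinner]
    norm_num
  rw [h1]
  have hbd1 : -1 ≤ 1 - 2 * m ^ 2 := by nlinarith
  have hbd2 : 1 - 2 * m ^ 2 ≤ 1 := by nlinarith
  have harcsin0 : 0 ≤ Real.arcsin m := Real.arcsin_nonneg.2 hm0
  have harcsin2 : Real.arcsin m ≤ Real.pi / 2 := Real.arcsin_le_pi_div_two m
  apply Real.injOn_cos ⟨Real.arccos_nonneg _, Real.arccos_le_pi _⟩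
    ⟨by linarith, by linarith⟩
  rw [Real.cos_arccos hbd1 hbd2, Real.cos_two_mul, Real.cos_arcsin,
    Real.sq_sqrt (by nlinarith : (0:ℝ) ≤ 1 - m ^ 2)]
  ring

end Aux

lemma aux_arcsin_le_add_cube {y : ℝ} (h0 : 0 ≤ y) (h1 : y ≤ 1 / 2) :
    Real.arcsin y ≤ y + y ^ 3 := by
  rcases eq_or_lt_of_le h0 with rfl | hy
  · simp
  have hy3 : y ^ 3 ≤ (1/2 : ℝ) ^ 3 := pow_le_pow_left₀ h0 h1 3
  have hx1 : y + y ^ 3 ≤ 1 := by nlinarith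
  have hcube : (y + y ^ 3) ^ 3 ≤ 4 * y ^ 3 := by
    have h2 : (1 + y ^ 2) ^ 3 ≤ 4 := by
      have hle : (1 + y ^ 2 : ℝ) ≤ 5 / 4 := by nlinarith
      have := pow_le_pow_left₀ (by positivity : (0:ℝ) ≤ 1 + y ^ 2) hle 3
      nlinarith
    have h3 : (y + y ^ 3) ^ 3 = y ^ 3 * (1 + y ^ 2) ^ 3 := by ring
    rw [h3]
    nlinarith [pow_pos hy 3]
  have hs : y ≤ Real.sin (y + y ^ 3) := by
    have h := Real.sin_gt_sub_cube (x := y + y ^ 3) (by positivity)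
    nlinarith [pow_pos hy 3]
  have hpi : (3:ℝ) < Real.pi := Real.pi_gt_three
  have hb1 : -(Real.pi / 2) ≤ y + y ^ 3 := by nlinarith [pow_pos hy 3]
  have hb2 : y + y ^ 3 ≤ Real.pi / 2 := by nlinarith
  calc Real.arcsin y ≤ Real.arcsin (Real.sin (y + y ^ 3)) := Real.monotone_arcsin hs
    _ = y + y ^ 3 := Real.arcsin_sin hb1 hb2

set_option maxHeartbeats 1000000 in
/-- For an arclength-parametrized curve with curvature bounded by `κ`
(Lipschitz tangent), a doubly critical pair `s < t` (chord orthogonal to both tangents,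
chord nonzero) forces the tangent to turn by at least `π/2` on `[s,t]`, i.e. the supremum
of pairwise tangent angles on `[s,t]` is at least `π/2`; consequently `t - s ≥ π/(2κ)`. -/
theorem stmt_6 (L κ : ℝ) (hκ : 0 < κ)
    (γ γ' : ℝ → EuclideanSpace ℝ (Fin 3))
    (hderiv : ∀ u ∈ Set.Icc (0:ℝ) L, HasDerivAt γ (γ' u) u)
    (hunit : ∀ u ∈ Set.Icc (0:ℝ) L, ‖γ' u‖ = 1)
    (hlip : ∀ u ∈ Set.Icc (0:ℝ) L, ∀ v ∈ Set.Icc (0:ℝ) L,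
      ‖γ' u - γ' v‖ ≤ κ * |u - v|)
    (s t : ℝ) (hs : 0 ≤ s) (hst : s < t) (ht : t ≤ L)
    (hne : γ t ≠ γ s)
    (hdc1 : inner ℝ (γ t - γ s) (γ' s) = (0:ℝ))
    (hdc2 : inner ℝ (γ t - γ s) (γ' t) = (0:ℝ)) :
    Real.pi / 2 ≤
      sSup {x : ℝ | ∃ u ∈ Set.Icc s t, ∃ v ∈ Set.Icc s t, x = angle (γ' u) (γ' v)} ∧
    t - s ≥ Real.pi / (2 * κ) := by
  have hmem : ∀ u ∈ Set.Icc s t, u ∈ Set.Icc (0:ℝ) L :=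
    fun u hu => ⟨hs.trans hu.1, hu.2.trans ht⟩
  -- Rolle: find u₀ ∈ (s,t) with ⟪γ' s, γ' u₀⟫ = 0
  set c : EuclideanSpace ℝ (Fin 3) := γ' s with hc
  have hf : ∀ u ∈ Set.Icc (0:ℝ) L,
      HasDerivAt (fun v => (inner ℝ c (γ v) : ℝ)) (inner ℝ c (γ' u)) u := by
    intro u hu
    have h0 := (hasDerivAt_const u c).inner (𝕜 := ℝ) (hderiv u hu)
    simpa using h0
  have hcont : ContinuousOn (fun v => (inner ℝ c (γ v) : ℝ)) (Set.Icc s t) :=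
    fun u hu => ((hf u (hmem u hu)).continuousAt).continuousWithinAt
  have hfeq : (inner ℝ c (γ s) : ℝ) = inner ℝ c (γ t) := by
    have h : (inner ℝ (γ t - γ s) c : ℝ) = 0 := hdc1
    rw [inner_sub_left] at h
    rw [real_inner_comm (γ s) c, real_inner_comm (γ t) c]
    linarith
  obtain ⟨u₀, hu₀, hu₀d⟩ := exists_hasDerivAt_eq_zero hst hcont hfeq
    (fun u hu => hf u (hmem u ⟨hu.1.le, hu.2.le⟩))
  have hu₀t : u₀ ∈ Set.Icc s t := ⟨hu₀.1.le, hu₀.2.le⟩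
  have hangle : angle (γ' s) (γ' u₀) = Real.pi / 2 :=
    (inner_eq_zero_iff_angle_eq_pi_div_two _ _).1 hu₀d
  -- angle ≤ 2 arcsin(κ|a-b|/2)
  have key : ∀ a ∈ Set.Icc s t, ∀ b ∈ Set.Icc s t,
      angle (γ' a) (γ' b) ≤ 2 * Real.arcsin (κ * |a - b| / 2) := by
    intro a ha b hb
    rw [aux_angle_eq_two_arcsin (hunit a (hmem a ha)) (hunit b (hmem b hb))]
    have hl := hlip a (hmem a ha) b (hmem b hb)
    have := Real.monotone_arcsin (show ‖γ' a - γ' b‖ / 2 ≤ κ * |a - b| / 2 by linarith)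
    linarith
  set d : ℝ := u₀ - s with hd
  have hd0 : 0 < d := by rw [hd]; linarith [hu₀.1]
  have hdts : d ≤ t - s := by rw [hd]; linarith [hu₀.2]
  -- chain bound
  have chain : ∀ n : ℕ, 0 < n →
      Real.pi / 2 ≤ n * (2 * Real.arcsin (κ * (d / n) / 2)) := by
    intro n hn
    have hnR : (0:ℝ) < n := Nat.cast_pos.2 hn
    set δ : ℝ := d / n with hδ
    have hδ0 : 0 < δ := div_pos hd0 hnR
    have hpt : ∀ i : ℕ, i ≤ n → s + i * δ ∈ Set.Icc s t := by
      intro i hi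
      have hiR : (i:ℝ) ≤ n := Nat.cast_le.2 hi
      constructor
      · nlinarith [Nat.cast_nonneg (α := ℝ) i]
      · have : (i:ℝ) * δ ≤ n * δ := by nlinarith
        have hnd : (n:ℝ) * δ = d := by rw [hδ]; field_simp
        nlinarith [hu₀.2]
    have step : ∀ i : ℕ, i ≤ n →
        angle (γ' s) (γ' (s + i * δ)) ≤ i * (2 * Real.arcsin (κ * δ / 2)) := by
      intro i hi
      induction i with
      | zero =>
        have hne0 : γ' s ≠ 0 := by
          intro h
          have h1 := hunit s (hmem s ⟨le_refl s, hst.le⟩)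
          rw [h, norm_zero] at h1; norm_num at h1
        simp [angle_self hne0]
      | succ i ih =>
        have hi' : i ≤ n := Nat.le_of_succ_le hi
        have h1 := ih hi'
        have htri := aux_angle_triangle_unit
          (hunit s (hmem s ⟨le_refl s, hst.le⟩))
          (hunit _ (hmem _ (hpt i hi')))
          (hunit _ (hmem _ (hpt (i+1) hi)))
          (y := γ' (s + i * δ)) (z := γ' (s + (i+1 : ℕ) * δ))
        have h2 := key _ (hpt i hi') _ (hpt (i+1) hi)
        have habs : |s + (i:ℝ) * δ - (s + ((i:ℕ)+1 : ℝ) * δ)| = δ := by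
          rw [show s + (i:ℝ) * δ - (s + ((i:ℕ)+1 : ℝ) * δ) = -δ by ring, abs_neg,
            abs_of_pos hδ0]
        rw [show ((i+1 : ℕ) : ℝ) = (i:ℝ) + 1 by push_cast; ring] at htri h2 ⊢
        rw [habs] at h2
        linarith
    have hfin := step n le_rfl
    have hnd : s + (n:ℝ) * δ = u₀ := by
      rw [hδ]
      field_simp
      linarith [hd]
    rw [hnd, hangle] at hfin
    exact hfin
  -- limit: π/2 ≤ κ * d
  have hκd : Real.pi / 2 ≤ κ * d := by
    have hκd0 : 0 < κ * d := mul_pos hκ hd0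
    refine le_of_forall_pos_le_add ?_
    intro ε hε
    obtain ⟨n, hn⟩ := exists_nat_gt (max (κ * d) ((κ * d) ^ 3 / ε))
    have hn1 : κ * d < n := lt_of_le_of_lt (le_max_left _ _) hn
    have hn2 : (κ * d) ^ 3 / ε < n := lt_of_le_of_lt (le_max_right _ _) hn
    have hnR : (0:ℝ) < n := lt_trans hκd0 hn1
    have hnpos : 0 < n := Nat.cast_pos.1 hnR
    have hn1' : 1 ≤ (n:ℝ) := Nat.one_le_cast.2 hnpos
    have h1 := chain n hnpos
    have hyd : κ * (d / (n:ℝ)) / 2 = κ * d / (2 * n) := by ring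
    rw [hyd] at h1
    have hy0 : 0 ≤ κ * d / (2 * (n:ℝ)) := by positivity
    have hy12 : κ * d / (2 * (n:ℝ)) ≤ 1 / 2 := by
      rw [div_le_div_iff₀ (by positivity) (by norm_num)]
      nlinarith
    have h2 := aux_arcsin_le_add_cube hy0 hy12
    have h3 : (n:ℝ) * (2 * Real.arcsin (κ * d / (2 * n)))
        ≤ (n:ℝ) * (2 * (κ * d / (2 * n) + (κ * d / (2 * n)) ^ 3)) :=
      mul_le_mul_of_nonneg_left (by linarith) hnR.le
    have h4 : (n:ℝ) * (2 * (κ * d / (2 * n) + (κ * d / (2 * n)) ^ 3))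
        = κ * d + (κ * d) ^ 3 / (4 * (n:ℝ) ^ 2) := by
      field_simp
      ring
    have h5 : (κ * d) ^ 3 / (4 * (n:ℝ) ^ 2) ≤ (κ * d) ^ 3 / n := by
      have h51 : (n:ℝ) ≤ 4 * (n:ℝ) ^ 2 := by nlinarith
      exact div_le_div_of_nonneg_left (by positivity) hnR h51
    have h6 : (κ * d) ^ 3 / (n:ℝ) < ε := by
      rw [div_lt_iff₀ hnR]
      have := (div_lt_iff₀ hε).1 hn2
      linarith
    calc Real.pi / 2 ≤ (n:ℝ) * (2 * Real.arcsin (κ * d / (2 * n))) := h1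
      _ ≤ κ * d + (κ * d) ^ 3 / (4 * (n:ℝ) ^ 2) := by rw [← h4]; exact h3
      _ ≤ κ * d + ε := by linarith
  constructor
  · apply le_csSup
    · refine ⟨Real.pi, ?_⟩
      rintro x ⟨u, hu, v, hv, rfl⟩
      exact angle_le_pi _ _
    · exact ⟨s, ⟨le_refl s, hst.le⟩, u₀, hu₀t, hangle.symm⟩
  · rw [ge_iff_le, div_le_iff₀ (by positivity)]
    nlinarith
end

section
/- Let γ : [0,L] → ℝ³ be an arclength-parametrized curve from p to q, with p ≠ q, whose total curvature is less than π/8, meaning the tangent direction turns by total angle less than π/8 along γ. Then every tangent vector γ'(s) makes angle less than π/8 with the chord direction (q − p)/‖q − p‖, every point of γ is within distance L from p, and ⟨γ'(s), q − p⟩ > ‖q−p‖·cos(π/4) > 0 for all s, so γ meets each plane orthogonal to q − p in at most one point (γ is monotone in the chord direction). -/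
open InnerProductGeometry

lemma stmt11_pair (L : ℝ)
    (γ' : ℝ → EuclideanSpace ℝ (Fin 3))
    (htc : ∀ (n : ℕ) (u : Fin (n + 1) → ℝ), Monotone u →
      (∀ i, u i ∈ Set.Icc (0:ℝ) L) →
      ∑ i : Fin n, angle (γ' (u i.castSucc)) (γ' (u i.succ))
        < Real.pi / 8)
    {s t : ℝ} (hs : s ∈ Set.Icc (0:ℝ) L) (ht : t ∈ Set.Icc (0:ℝ) L) (hst : s ≤ t) :
    angle (γ' s) (γ' t) < Real.pi / 8 := by
  have h := htc 1 ![s, t] ?_ ?_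
  · simpa using h
  · intro i j hij
    fin_cases i <;> fin_cases j <;> simp_all
  · intro i; fin_cases i <;> simpa

/-- If an arclength-parametrized curve `γ` from `p = γ 0` to `q = γ L`
has total curvature less than `π/8` (the sum of turning angles of the tangent over any
partition is less than `π/8`), then each tangent makes angle less than `π/8` with the
chord direction, every point of `γ` is within distance `L` of `p`, the tangent has inner
product more than `‖q-p‖·cos(π/4) > 0` with the chord, and `s ↦ ⟪γ s, q - p⟫` is strictly
increasing (so `γ` meets each plane orthogonal to `q - p` at most once). -/
theorem stmt_11 (L : ℝ) (hL : 0 < L)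
    (γ γ' : ℝ → EuclideanSpace ℝ (Fin 3))
    (hderiv : ∀ s ∈ Set.Icc (0:ℝ) L, HasDerivAt γ (γ' s) s)
    (hunit : ∀ s ∈ Set.Icc (0:ℝ) L, ‖γ' s‖ = 1)
    (p q : EuclideanSpace ℝ (Fin 3)) (hp : γ 0 = p) (hq : γ L = q) (hpq : p ≠ q)
    (htc : ∀ (n : ℕ) (u : Fin (n + 1) → ℝ), Monotone u →
      (∀ i, u i ∈ Set.Icc (0:ℝ) L) →
      ∑ i : Fin n, angle (γ' (u i.castSucc)) (γ' (u i.succ))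
        < Real.pi / 8) :
    (∀ s ∈ Set.Icc (0:ℝ) L, angle (γ' s) (q - p) < Real.pi / 8) ∧
    (∀ s ∈ Set.Icc (0:ℝ) L, ‖γ s - p‖ ≤ L) ∧
    (∀ s ∈ Set.Icc (0:ℝ) L,
      (inner ℝ (γ' s) (q - p) : ℝ) > ‖q - p‖ * Real.cos (Real.pi / 4) ∧
      (0:ℝ) < ‖q - p‖ * Real.cos (Real.pi / 4)) ∧
    StrictMonoOn (fun s => (inner ℝ (γ s) (q - p) : ℝ)) (Set.Icc 0 L) := by
  have hπ := Real.pi_pos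
  have hqp : q - p ≠ 0 := sub_ne_zero.2 (Ne.symm hpq)
  have hqpn : (0:ℝ) < ‖q - p‖ := norm_pos_iff.2 hqp
  -- pairwise angle bound
  have hpair : ∀ s ∈ Set.Icc (0:ℝ) L, ∀ t ∈ Set.Icc (0:ℝ) L,
      angle (γ' s) (γ' t) < Real.pi / 8 := by
    intro s hs t ht
    rcases le_total s t with h | h
    · exact stmt11_pair L γ' htc hs ht h
    · rw [angle_comm]; exact stmt11_pair L γ' htc ht hs h
  have mem8 : Real.pi / 8 ∈ Set.Icc 0 Real.pi := by
    constructor <;> nlinarith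
  have memang : ∀ x y : EuclideanSpace ℝ (Fin 3), angle x y ∈ Set.Icc 0 Real.pi :=
    fun x y => ⟨angle_nonneg x y, angle_le_pi x y⟩
  -- pairwise inner bound
  have hinpair : ∀ s ∈ Set.Icc (0:ℝ) L, ∀ t ∈ Set.Icc (0:ℝ) L,
      Real.cos (Real.pi / 8) < (inner ℝ (γ' s) (γ' t) : ℝ) := by
    intro s hs t ht
    have h1 : Real.cos (angle (γ' s) (γ' t)) =
        (inner ℝ (γ' s) (γ' t) : ℝ) / (‖γ' s‖ * ‖γ' t‖) := cos_angle _ _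
    rw [hunit s hs, hunit t ht, one_mul, div_one] at h1
    rw [← h1]
    exact Real.strictAntiOn_cos (memang _ _) mem8 (hpair s hs t ht)
  -- key: inner of a tangent with the chord
  have hchord : ∀ t ∈ Set.Icc (0:ℝ) L,
      L * Real.cos (Real.pi / 8) < (inner ℝ (γ' t) (q - p) : ℝ) := by
    intro t ht
    set f : ℝ → ℝ := fun s => (inner ℝ (γ' t) (γ s) : ℝ) with hf
    have hfd : ∀ s ∈ Set.Icc (0:ℝ) L, HasDerivAt f ((inner ℝ (γ' t) (γ' s) : ℝ)) s := by
      intro s hs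
      have := (hasDerivAt_const s (γ' t)).inner ℝ (hderiv s hs)
      simpa using this
    have hfc : ContinuousOn f (Set.Icc 0 L) :=
      fun x hx => (hfd x hx).continuousAt.continuousWithinAt
    obtain ⟨c, hc, hceq⟩ := exists_hasDerivAt_eq_slope f (fun s => (inner ℝ (γ' t) (γ' s) : ℝ))
      hL hfc (fun x hx => hfd x (Set.mem_Icc.2 ⟨hx.1.le, hx.2.le⟩))
    have hcI : c ∈ Set.Icc (0:ℝ) L := ⟨hc.1.le, hc.2.le⟩
    have hbig : Real.cos (Real.pi / 8) < (inner ℝ (γ' t) (γ' c) : ℝ) := hinpair t ht c hcI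
    have hfL : f L - f 0 = (inner ℝ (γ' t) (q - p) : ℝ) := by
      simp [hf, hq, hp, inner_sub_right]
    rw [hceq] at hbig
    have : L * Real.cos (Real.pi / 8) < L * ((f L - f 0) / (L - 0)) := by
      exact (mul_lt_mul_iff_right₀ hL).2 hbig
    rw [sub_zero] at this
    rw [← hfL]
    calc L * Real.cos (Real.pi / 8) < L * ((f L - f 0) / L) := this
      _ = f L - f 0 := by field_simp
  -- length bounds
  have hlen : ∀ s ∈ Set.Icc (0:ℝ) L, ‖γ s - p‖ ≤ L := by
    intro s hs
    have := (convex_Icc (0:ℝ) L).norm_image_sub_le_of_norm_hasDerivWithin_le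
      (f := γ) (f' := γ') (C := 1)
      (fun x hx => (hderiv x hx).hasDerivWithinAt)
      (fun x hx => le_of_eq (hunit x hx))
      (Set.left_mem_Icc.2 hL.le) hs
    rw [hp] at this
    calc ‖γ s - p‖ ≤ 1 * ‖s - 0‖ := this
      _ = |s| := by rw [one_mul, sub_zero, Real.norm_eq_abs]
      _ = s := abs_of_nonneg hs.1
      _ ≤ L := hs.2
  have hqpL : ‖q - p‖ ≤ L := by
    have := hlen L (Set.right_mem_Icc.2 hL.le)
    rwa [hq] at this
  have hcos8pos : 0 < Real.cos (Real.pi / 8) := by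
    apply Real.cos_pos_of_mem_Ioo
    constructor <;> nlinarith
  have hcos48 : Real.cos (Real.pi / 4) < Real.cos (Real.pi / 8) := by
    apply Real.strictAntiOn_cos _ _ (by linarith)
    · constructor <;> nlinarith
    · constructor <;> nlinarith
  have hcos4pos : 0 < Real.cos (Real.pi / 4) := by
    apply Real.cos_pos_of_mem_Ioo
    constructor <;> nlinarith
  -- chord inner lower bound
  have hchord' : ∀ s ∈ Set.Icc (0:ℝ) L,
      ‖q - p‖ * Real.cos (Real.pi / 8) < (inner ℝ (γ' s) (q - p) : ℝ) := by
    intro s hs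
    calc ‖q - p‖ * Real.cos (Real.pi / 8) ≤ L * Real.cos (Real.pi / 8) := by
          apply mul_le_mul_of_nonneg_right hqpL hcos8pos.le
      _ < _ := hchord s hs
  refine ⟨?_, hlen, ?_, ?_⟩
  · -- angle with chord
    intro s hs
    have h1 : Real.cos (angle (γ' s) (q - p)) =
        (inner ℝ (γ' s) (q - p) : ℝ) / (‖γ' s‖ * ‖q - p‖) := cos_angle _ _
    rw [hunit s hs, one_mul] at h1
    have h2 : Real.cos (Real.pi / 8) < Real.cos (angle (γ' s) (q - p)) := by
      rw [h1]
      rw [lt_div_iff₀ hqpn, mul_comm]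
      exact hchord' s hs
    exact (Real.strictAntiOn_cos.lt_iff_gt mem8 (memang _ _)).mp h2
  · intro s hs
    refine ⟨?_, mul_pos hqpn hcos4pos⟩
    calc ‖q - p‖ * Real.cos (Real.pi / 4) < ‖q - p‖ * Real.cos (Real.pi / 8) :=
          (mul_lt_mul_iff_right₀ hqpn).2 hcos48
      _ < _ := hchord' s hs
  · -- strict monotonicity
    set g : ℝ → ℝ := fun s => (inner ℝ (γ s) (q - p) : ℝ) with hg
    have hgd : ∀ s ∈ Set.Icc (0:ℝ) L, HasDerivAt g ((inner ℝ (γ' s) (q - p) : ℝ)) s := by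
      intro s hs
      have := (hderiv s hs).inner ℝ (hasDerivAt_const s (q - p))
      simpa using this
    apply strictMonoOn_of_deriv_pos (convex_Icc 0 L)
      (fun x hx => (hgd x hx).continuousAt.continuousWithinAt)
    intro x hx
    rw [interior_Icc] at hx
    have hxI : x ∈ Set.Icc (0:ℝ) L := ⟨hx.1.le, hx.2.le⟩
    rw [(hgd x hxI).deriv]
    calc (0:ℝ) < ‖q - p‖ * Real.cos (Real.pi / 8) := mul_pos hqpn hcos8pos
      _ < _ := hchord' x hxI
end
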